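/- arXiv:1008.0940 — 4 statements merged into one kernel-verified Lean document; each statement's English description precedes it below -/
import Mathlib

section
/- Let μ be a probability measure on (0,∞) with distribution function F such that L(t) := 1 − F(t) is positive for all t and slowly varying at infinity. Then the renewal function U(t) = Σ_{n=0}^∞ μ^{*n}([0,t]) is finite for every t, and U(t)·(1 − F(t)) → 1 as t → ∞. -/
/-!
Every jump of the renewal walk is positive, so `μ^{*n}([0,t]) ≤ F(t)^n` and `U(t) ≤ 1 / L(t)`,
where `L = 1 - F`. Conversely, let `m(t) = ∫_{(0,t]} x dμ`. The `n`-fold convolution of `μ`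
restricted to `(0,t]` has mass `F(t)^n`, and by Markov's inequality at most `n F(t)^{n-1} m(t) / t`
of it lies above `t`; summing over `n` gives `U(t) L(t) ≥ 1 - m(t) / (t L(t))`.
Finally `m(t) ≤ m(t/2) + t (L(t/2) - L(t))`, and since `L(t/2) / L(t) → 1` this makes
`r(t) = m(t) / (t L(t))` satisfy `r(t) ≤ (3/4) r(t/2) + o(1)`, which forces `r(t) → 0`.
-/

open MeasureTheory ProbabilityTheory Filter Set Topology ENNReal

/-- `n`-fold convolution power of a measure on `ℝ`, with `μ^{*0} = δ_0`. -/
noncomputable def convPow (μ : MeasureTheory.Measure ℝ) : ℕ → MeasureTheory.Measure ℝ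
  | 0 => MeasureTheory.Measure.dirac 0
  | n + 1 => MeasureTheory.Measure.conv (convPow μ n) μ

lemma hasSum_coe_mul_pow_sub_one {𝕜 : Type*} [NormedDivisionRing 𝕜] [HasSummableGeomSeries 𝕜]
    {r : 𝕜} (hr : ‖r‖ < 1) :
    HasSum (fun n : ℕ => (n : 𝕜) * r ^ (n - 1)) (1 / (1 - r) ^ 2) := by
  rw [← hasSum_nat_add_iff' 1]
  simpa using hasSum_choose_mul_geometric_of_norm_lt_one 1 hr

/-- Iterating the contraction `r t ≤ a r (t/2) + δ` first down to a region where `r` is bounded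
shows that `r` is bounded, and then shows that `limsup r ≤ δ / (1 - a)` for every `δ`. -/
lemma tendsto_zero_of_le_mul_comp_half_add {r : ℝ → ℝ} {a : ℝ} (ha₀ : 0 ≤ a) (ha₁ : a < 1)
    (hr₀ : ∀ᶠ t in atTop, 0 ≤ r t) (hbdd : ∀ T, BddAbove (r '' Iic T))
    (hr : ∀ δ > 0, ∀ᶠ t in atTop, r t ≤ a * r (t / 2) + δ) :
    Tendsto r atTop (𝓝 0) := by
  refine tendsto_order.2 ⟨fun b hb => hr₀.mono fun t ht => hb.trans_le ht, fun ε hε => ?_⟩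
  set η := ε / 2 with hη_def
  have hη : 0 < η := half_pos hε
  obtain ⟨T₀, hT₀⟩ := eventually_atTop.1 (hr ((1 - a) * η) (by positivity))
  set T := max T₀ 1
  have hT : 0 < T := lt_max_of_lt_right one_pos
  have hstep (t : ℝ) (ht : T ≤ t) : r t ≤ a * r (t / 2) + (1 - a) * η :=
    hT₀ t ((le_max_left _ _).trans ht)
  obtain ⟨B, hB⟩ := hbdd T
  set C := max B 0 + η
  have hBC : B ≤ C := le_add_of_le_of_nonneg (le_max_left _ _) hη.le
  have hbound (k : ℕ) : ∀ t ≤ 2 ^ k * T, r t ≤ C := by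
    induction k with
    | zero => exact fun t ht => (hB ⟨t, by simpa using ht, rfl⟩).trans hBC
    | succ k ih =>
      intro t ht
      rcases le_or_gt t T with htT | htT
      · exact (hB ⟨t, htT, rfl⟩).trans hBC
      · calc r t ≤ a * C + (1 - a) * η :=
              (hstep t htT.le).trans (by gcongr; exact ih _ (by rw [pow_succ] at ht; linarith))
          _ ≤ C := by nlinarith [le_max_right B 0]
  have hbounded (t : ℝ) : r t ≤ C := by
    obtain ⟨k, hk⟩ := pow_unbounded_of_one_lt (t / T) one_lt_two
    exact hbound k t ((div_lt_iff₀ hT).1 hk).le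
  have hdecay (k : ℕ) : ∀ t ≥ 2 ^ k * T, r t ≤ a ^ k * C + η := by
    induction k with
    | zero => exact fun t _ => by linarith [hbounded t]
    | succ k ih =>
      intro t ht
      have hTt : T ≤ t := le_trans (le_mul_of_one_le_left hT.le (one_le_pow₀ one_le_two)) ht
      calc r t ≤ a * (a ^ k * C + η) + (1 - a) * η :=
            (hstep t hTt).trans (by gcongr; exact ih _ (by rw [pow_succ] at ht; linarith))
        _ = a ^ (k + 1) * C + η := by ring
  obtain ⟨k, hk⟩ := ((tendsto_pow_atTop_nhds_zero_of_lt_one ha₀ ha₁).mul_const C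
    |>.eventually (gt_mem_nhds (show 0 * C < η by rwa [zero_mul]))).exists
  filter_upwards [eventually_ge_atTop (2 ^ k * T)] with t ht
  linarith [hdecay k t ht, hη_def]

lemma tendsto_div_mul_zero_of_tendsto_half_div {L M : ℝ → ℝ} (hL : Antitone L) (hL₀ : ∀ t, 0 < L t)
    (hslow : Tendsto (fun t => L (t / 2) / L t) atTop (𝓝 1)) (hM₀ : ∀ t, 0 ≤ M t)
    (hM : ∀ t, 0 < t → M t ≤ t)
    (hsplit : ∀ t, 0 < t → M t ≤ M (t / 2) + t * (L (t / 2) - L t)) :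
    Tendsto (fun t => M t / (t * L t)) atTop (𝓝 0) := by
  have hr₀ (t : ℝ) (ht : 0 < t) : 0 ≤ M t / (t * L t) :=
    div_nonneg (hM₀ t) (mul_pos ht (hL₀ t)).le
  refine tendsto_zero_of_le_mul_comp_half_add (a := 3 / 4) (by norm_num) (by norm_num)
    ((eventually_gt_atTop 0).mono hr₀) (fun T => ⟨(L T)⁻¹, ?_⟩) fun δ hδ => ?_
  · rintro _ ⟨t, ht, rfl⟩
    rcases le_or_gt t 0 with ht₀ | ht₀
    · exact (div_nonpos_of_nonneg_of_nonpos (hM₀ t)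
        (mul_nonpos_of_nonpos_of_nonneg ht₀ (hL₀ t).le)).trans (inv_pos.2 (hL₀ T)).le
    · calc M t / (t * L t) ≤ t / (t * L t) :=
            div_le_div_of_nonneg_right (hM t ht₀) (mul_pos ht₀ (hL₀ t)).le
        _ = (L t)⁻¹ := by field_simp
        _ ≤ (L T)⁻¹ := inv_anti₀ (hL₀ T) (hL ht)
  filter_upwards [eventually_gt_atTop 0,
    hslow.eventually (eventually_lt_nhds (by simp [hδ] : (1 : ℝ) < 1 + min δ (1 / 2)))]
    with t ht hq
  have hq₁ : L (t / 2) / L t ≤ 3 / 2 := by linarith [min_le_right δ (1 / 2)]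
  have hq₂ : L (t / 2) / L t - 1 ≤ δ := by linarith [min_le_left δ (1 / 2)]
  have hr : 0 ≤ M (t / 2) / (t / 2 * L (t / 2)) := hr₀ _ (half_pos ht)
  calc M t / (t * L t) ≤ (M (t / 2) + t * (L (t / 2) - L t)) / (t * L t) :=
        div_le_div_of_nonneg_right (hsplit t ht) (mul_pos ht (hL₀ t)).le
    _ = 1 / 2 * (L (t / 2) / L t) * (M (t / 2) / (t / 2 * L (t / 2))) +
          (L (t / 2) / L t - 1) := by
        have := (hL₀ (t / 2)).ne'
        have := (hL₀ t).ne'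
        field_simp
    _ ≤ 1 / 2 * (3 / 2) * (M (t / 2) / (t / 2 * L (t / 2))) + δ := by gcongr
    _ = 3 / 4 * (M (t / 2) / (t / 2 * L (t / 2))) + δ := by ring

namespace MeasureTheory.Measure

variable {α α' β β' : Measure ℝ}

lemma conv_apply {s : Set ℝ} (hs : MeasurableSet s) :
    (α ∗ β) s = α.prod β ((fun p : ℝ × ℝ => p.1 + p.2) ⁻¹' s) :=
  map_apply measurable_add hs

lemma conv_mono [SFinite β'] (hα : α ≤ α') (hβ : β ≤ β') : α ∗ β ≤ α' ∗ β' :=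
  map_mono (prod_mono hα hβ) measurable_add

lemma conv_apply_univ [SFinite β] : (α ∗ β) univ = α univ * β univ := by
  rw [conv_apply MeasurableSet.univ, preimage_univ, ← univ_prod_univ, prod_prod]

lemma conv_apply_le_mul [SFinite β] {s A B A' B' : Set ℝ} (hs : MeasurableSet s)
    (hA' : α A'ᶜ = 0) (hB' : β B'ᶜ = 0) (h : ∀ x ∈ A', ∀ y ∈ B', x + y ∈ s → x ∈ A ∧ y ∈ B) :
    (α ∗ β) s ≤ α A * β B := by
  rw [conv_apply hs, ← prod_prod]
  refine measure_mono_ae ?_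
  filter_upwards [quasiMeasurePreserving_fst.ae (mem_ae_iff.2 hA'),
    quasiMeasurePreserving_snd.ae (mem_ae_iff.2 hB')] with p hx hy hp
  exact h _ hx _ hy hp

lemma lintegral_ofReal_conv_le [SFinite β] :
    ∫⁻ x, ENNReal.ofReal x ∂(α ∗ β) ≤
      (∫⁻ x, ENNReal.ofReal x ∂α) * β univ + (∫⁻ x, ENNReal.ofReal x ∂β) * α univ := by
  rw [lintegral_conv (by fun_prop)]
  calc ∫⁻ x, ∫⁻ y, ENNReal.ofReal (x + y) ∂β ∂α
      ≤ ∫⁻ x, (ENNReal.ofReal x * β univ + ∫⁻ y, ENNReal.ofReal y ∂β) ∂α := by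
        gcongr with x
        calc ∫⁻ y, ENNReal.ofReal (x + y) ∂β
            ≤ ∫⁻ y, (ENNReal.ofReal x + ENNReal.ofReal y) ∂β :=
              lintegral_mono fun y => ofReal_add_le
          _ = _ := by rw [lintegral_add_left measurable_const, lintegral_const]
    _ = _ := by
        rw [lintegral_add_right _ measurable_const, lintegral_mul_const _ (by fun_prop),
          lintegral_const, mul_comm (∫⁻ _, _ ∂β)]

end MeasureTheory.Measure

section convPow

variable {κ μ : Measure ℝ}

instance [SFinite μ] (n : ℕ) : SFinite (convPow μ n) := by
  induction n with
  | zero => exact inferInstanceAs (SFinite (Measure.dirac 0))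
  | succ n ih => exact inferInstanceAs (SFinite (convPow μ n ∗ μ))

instance [IsFiniteMeasure μ] (n : ℕ) : IsFiniteMeasure (convPow μ n) := by
  induction n with
  | zero => exact inferInstanceAs (IsFiniteMeasure (Measure.dirac 0))
  | succ n ih => exact inferInstanceAs (IsFiniteMeasure (convPow μ n ∗ μ))

lemma convPow_mono [SFinite μ] (h : κ ≤ μ) : ∀ n, convPow κ n ≤ convPow μ n
  | 0 => le_rfl
  | n + 1 => Measure.conv_mono (convPow_mono h n) h

lemma convPow_apply_univ [SFinite μ] (n : ℕ) : convPow μ n univ = μ univ ^ n := by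
  induction n with
  | zero => simp [convPow]
  | succ n ih => rw [convPow, Measure.conv_apply_univ, ih, pow_succ]

lemma convPow_Iio_eq_zero [SFinite μ] (hμ : μ (Iio 0) = 0) (n : ℕ) :
    convPow μ n (Iio 0) = 0 := by
  induction n with
  | zero => simp [convPow]
  | succ n ih =>
    refine le_zero_iff.1 ?_
    calc convPow μ (n + 1) (Iio 0) ≤ convPow μ n ∅ * μ ∅ :=
          Measure.conv_apply_le_mul measurableSet_Iio (A' := Ici 0) (B' := Ici 0)
            (by rw [compl_Ici]; exact ih) (by rw [compl_Ici]; exact hμ)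
            (fun x hx y hy hxy => absurd (mem_Iio.1 hxy) (not_lt.2 (add_nonneg hx hy)))
      _ = 0 := by simp

lemma convPow_Icc_le_pow [SFinite μ] (hμ : μ (Iic 0) = 0) (t : ℝ) (n : ℕ) :
    convPow μ n (Icc 0 t) ≤ μ (Ioc 0 t) ^ n := by
  induction n with
  | zero =>
    rw [pow_zero]
    exact prob_le_one (μ := Measure.dirac (0 : ℝ))
  | succ n ih =>
    have hneg : convPow μ n (Iio 0) = 0 :=
      convPow_Iio_eq_zero (measure_mono_null Iio_subset_Iic_self hμ) n
    calc convPow μ (n + 1) (Icc 0 t) ≤ convPow μ n (Icc 0 t) * μ (Ioc 0 t) :=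
          Measure.conv_apply_le_mul measurableSet_Icc (A' := Ici 0) (B' := Ioi 0)
            (by rw [compl_Ici]; exact hneg) (by rw [compl_Ioi]; exact hμ)
            (fun x hx y hy hxy => ⟨⟨hx, by linarith [hxy.2, mem_Ioi.1 hy]⟩,
              ⟨hy, by linarith [hxy.2, mem_Ici.1 hx]⟩⟩)
      _ ≤ μ (Ioc 0 t) ^ n * μ (Ioc 0 t) := by gcongr
      _ = μ (Ioc 0 t) ^ (n + 1) := (pow_succ _ _).symm

lemma lintegral_ofReal_convPow_le [SFinite μ] (n : ℕ) :
    ∫⁻ x, ENNReal.ofReal x ∂convPow μ n ≤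
      n * (∫⁻ x, ENNReal.ofReal x ∂μ) * μ univ ^ (n - 1) := by
  induction n with
  | zero => simp [convPow]
  | succ n ih =>
    calc ∫⁻ x, ENNReal.ofReal x ∂convPow μ (n + 1)
        ≤ (∫⁻ x, ENNReal.ofReal x ∂convPow μ n) * μ univ +
            (∫⁻ x, ENNReal.ofReal x ∂μ) * convPow μ n univ :=
          Measure.lintegral_ofReal_conv_le
      _ ≤ n * (∫⁻ x, ENNReal.ofReal x ∂μ) * μ univ ^ (n - 1) * μ univ +
            (∫⁻ x, ENNReal.ofReal x ∂μ) * μ univ ^ n := by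
          rw [convPow_apply_univ]; gcongr
      _ = ↑(n + 1) * (∫⁻ x, ENNReal.ofReal x ∂μ) * μ univ ^ (n + 1 - 1) := by
          rcases n with _ | n <;> simp [pow_succ]
          ring

end convPow

noncomputable def truncatedMean (μ : Measure ℝ) (t : ℝ) : ℝ≥0∞ :=
  ∫⁻ x in Ioc 0 t, ENNReal.ofReal x ∂μ

noncomputable def renewalFunction (μ : Measure ℝ) (t : ℝ) : ℝ≥0∞ :=
  ∑' n, convPow μ n (Icc 0 t)

section Renewal

variable {μ : Measure ℝ}

lemma truncatedMean_le_add {s t : ℝ} (hs : 0 ≤ s) (hst : s ≤ t) :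
    truncatedMean μ t ≤ truncatedMean μ s + ENNReal.ofReal t * μ (Ioc s t) := by
  calc truncatedMean μ t
      ≤ truncatedMean μ s + ∫⁻ x in Ioc s t, ENNReal.ofReal x ∂μ := by
        rw [truncatedMean, ← Ioc_union_Ioc_eq_Ioc hs hst]
        exact lintegral_union_le _ _ _
    _ ≤ truncatedMean μ s + ∫⁻ _ in Ioc s t, ENNReal.ofReal t ∂μ :=
        add_le_add le_rfl (setLIntegral_mono measurable_const fun x hx =>
          ofReal_le_ofReal hx.2)
    _ = truncatedMean μ s + ENNReal.ofReal t * μ (Ioc s t) := by rw [setLIntegral_const]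

lemma truncatedMean_le (t : ℝ) : truncatedMean μ t ≤ ENNReal.ofReal t * μ (Ioc 0 t) := by
  rcases le_or_gt 0 t with ht | ht
  · simpa [truncatedMean] using truncatedMean_le_add (μ := μ) le_rfl ht
  · simp [truncatedMean, Ioc_eq_empty_of_le ht.le]

lemma truncatedMean_ne_top [IsFiniteMeasure μ] (t : ℝ) : truncatedMean μ t ≠ ⊤ :=
  ne_top_of_le_ne_top (mul_ne_top ofReal_ne_top (measure_ne_top _ _)) (truncatedMean_le t)

lemma truncatedMean_toReal_le [IsFiniteMeasure μ] {t : ℝ} (ht : 0 ≤ t) :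
    (truncatedMean μ t).toReal ≤ t * (μ (Ioc 0 t)).toReal := by
  simpa [toReal_mul, ht] using
    toReal_mono (mul_ne_top ofReal_ne_top (measure_ne_top _ _)) (truncatedMean_le (μ := μ) t)

lemma truncatedMean_toReal_le_add [IsFiniteMeasure μ] {s t : ℝ} (hs : 0 ≤ s) (hst : s ≤ t) :
    (truncatedMean μ t).toReal ≤
      (truncatedMean μ s).toReal + t * ((μ (Ioc 0 t)).toReal - (μ (Ioc 0 s)).toReal) := by
  have hsplit : (μ (Ioc 0 t)).toReal = (μ (Ioc 0 s)).toReal + (μ (Ioc s t)).toReal := by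
    rw [← Ioc_union_Ioc_eq_Ioc hs hst, measure_union (Ioc_disjoint_Ioc_of_le le_rfl)
      measurableSet_Ioc, toReal_add (measure_ne_top _ _) (measure_ne_top _ _)]
  have hs_ne_top := truncatedMean_ne_top (μ := μ) s
  have h := toReal_mono (by finiteness) (truncatedMean_le_add (μ := μ) hs hst)
  rw [toReal_add hs_ne_top (by finiteness), toReal_mul,
    toReal_ofReal (hs.trans hst)] at h
  rwa [hsplit, add_sub_cancel_left]

lemma ofReal_mul_pow_le_convPow_Icc_add [SFinite μ] (t : ℝ) (n : ℕ) :
    ENNReal.ofReal t * μ (Ioc 0 t) ^ n ≤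
      ENNReal.ofReal t * convPow μ n (Icc 0 t) + n * truncatedMean μ t * μ (Ioc 0 t) ^ (n - 1) := by
  set κ := μ.restrict (Ioc 0 t)
  have hκ : κ univ = μ (Ioc 0 t) := by rw [Measure.restrict_apply_univ]
  have hκneg : convPow κ n (Iio 0) = 0 := by
    refine convPow_Iio_eq_zero ?_ n
    rw [Measure.restrict_apply measurableSet_Iio]
    exact measure_mono_null (fun x hx => (lt_asymm hx.1 hx.2.1).elim) measure_empty
  have hcover : Iio 0 ∪ Icc 0 t ∪ Ioi t = univ := eq_univ_of_forall fun x => by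
    simp only [mem_union, mem_Iio, mem_Icc, mem_Ioi]
    grind
  have hmarkov : ENNReal.ofReal t * convPow κ n (Ioi t) ≤ ∫⁻ x, ENNReal.ofReal x ∂convPow κ n :=
    calc ENNReal.ofReal t * convPow κ n (Ioi t)
        ≤ ENNReal.ofReal t * convPow κ n {x | ENNReal.ofReal t ≤ ENNReal.ofReal x} := by
          gcongr
          exact fun x hx => ofReal_le_ofReal (le_of_lt hx)
      _ ≤ ∫⁻ x, ENNReal.ofReal x ∂convPow κ n := mul_meas_ge_le_lintegral₀ (by fun_prop) _
  calc ENNReal.ofReal t * μ (Ioc 0 t) ^ n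
      = ENNReal.ofReal t * convPow κ n (Iio 0 ∪ Icc 0 t ∪ Ioi t) := by
        rw [← hκ, ← convPow_apply_univ, hcover]
    _ ≤ ENNReal.ofReal t * (convPow κ n (Iio 0) + convPow κ n (Icc 0 t) + convPow κ n (Ioi t)) := by
        gcongr
        exact (measure_union_le _ _).trans (add_le_add (measure_union_le _ _) le_rfl)
    _ = ENNReal.ofReal t * convPow κ n (Icc 0 t) + ENNReal.ofReal t * convPow κ n (Ioi t) := by
        rw [hκneg, zero_add, mul_add]
    _ ≤ ENNReal.ofReal t * convPow μ n (Icc 0 t) + ∫⁻ x, ENNReal.ofReal x ∂convPow κ n := by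
        gcongr
        exact convPow_mono Measure.restrict_le_self n
    _ ≤ ENNReal.ofReal t * convPow μ n (Icc 0 t) +
          n * truncatedMean μ t * μ (Ioc 0 t) ^ (n - 1) := by
        rw [← hκ]
        gcongr
        exact lintegral_ofReal_convPow_le n

lemma renewalFunction_le_inv [SFinite μ] (hμ : μ (Iic 0) = 0) (t : ℝ) :
    renewalFunction μ t ≤ (1 - μ (Ioc 0 t))⁻¹ := by
  rw [renewalFunction, ← ENNReal.tsum_geometric]
  exact ENNReal.tsum_le_tsum (convPow_Icc_le_pow hμ t)

lemma renewalFunction_lt_top [SFinite μ] (hμ : μ (Iic 0) = 0) {t : ℝ} (ht : μ (Ioc 0 t) < 1) :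
    renewalFunction μ t < ⊤ :=
  (renewalFunction_le_inv hμ t).trans_lt (ENNReal.inv_lt_top.2 (tsub_pos_of_lt ht))

lemma renewalFunction_toReal_mul_le [SFinite μ] (hμ : μ (Iic 0) = 0) {t : ℝ}
    (ht : μ (Ioc 0 t) < 1) :
    (renewalFunction μ t).toReal * (1 - (μ (Ioc 0 t)).toReal) ≤ 1 := by
  have hq : 0 < 1 - (μ (Ioc 0 t)).toReal :=
    sub_pos.2 (toReal_lt_of_lt_ofReal (by rwa [ofReal_one]))
  rw [← le_div_iff₀ hq, one_div]
  calc (renewalFunction μ t).toReal ≤ ((1 - μ (Ioc 0 t))⁻¹).toReal :=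
        toReal_mono (inv_ne_top.2 (tsub_pos_of_lt ht).ne') (renewalFunction_le_inv hμ t)
    _ = (1 - (μ (Ioc 0 t)).toReal)⁻¹ := by
        rw [toReal_inv, toReal_sub_of_le ht.le one_ne_top, toReal_one]

lemma one_sub_le_renewalFunction_toReal_mul [IsFiniteMeasure μ] (hμ : μ (Iic 0) = 0) {t : ℝ}
    (ht : 0 < t) (hlt : μ (Ioc 0 t) < 1) :
    1 - (truncatedMean μ t).toReal / (t * (1 - (μ (Ioc 0 t)).toReal)) ≤
      (renewalFunction μ t).toReal * (1 - (μ (Ioc 0 t)).toReal) := by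
  set p := (μ (Ioc 0 t)).toReal
  set m := (truncatedMean μ t).toReal
  set u := (renewalFunction μ t).toReal
  have hp : p < 1 := toReal_lt_of_lt_ofReal (by rwa [ofReal_one])
  have hq : 0 < 1 - p := sub_pos.2 hp
  have hm := truncatedMean_ne_top (μ := μ) t
  have hu : HasSum (fun n => (convPow μ n (Icc 0 t)).toReal) u := by
    simpa only [u, renewalFunction, ENNReal.tsum_toReal_eq fun n => measure_ne_top _ _] using
      ENNReal.hasSum_toReal (renewalFunction_lt_top hμ hlt).ne
  have hterm (n : ℕ) : t * p ^ n ≤ t * (convPow μ n (Icc 0 t)).toReal + m * (n * p ^ (n - 1)) := by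
    have := toReal_mono (by finiteness) (ofReal_mul_pow_le_convPow_Icc_add (μ := μ) t n)
    rw [toReal_add (by finiteness) (by finiteness)] at this
    simp only [toReal_mul, toReal_ofReal ht.le, toReal_pow, toReal_natCast] at this
    linarith
  have hsum : t * (1 - p)⁻¹ ≤ t * u + m * (1 / (1 - p) ^ 2) :=
    hasSum_le hterm ((hasSum_geometric_of_lt_one toReal_nonneg hp).mul_left t)
      ((hu.mul_left t).add ((hasSum_coe_mul_pow_sub_one
        (by rwa [Real.norm_of_nonneg toReal_nonneg])).mul_left m))
  have : 1 ≤ u * (1 - p) + m / (t * (1 - p)) :=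
    calc 1 = (1 - p) / t * (t * (1 - p)⁻¹) := by field_simp
      _ ≤ (1 - p) / t * (t * u + m * (1 / (1 - p) ^ 2)) := by gcongr
      _ = u * (1 - p) + m / (t * (1 - p)) := by field_simp
  linarith

end Renewal

theorem tendsto_renewalFunction_toReal_mul {μ : Measure ℝ} [IsFiniteMeasure μ]
    (hμ : μ (Iic 0) = 0) (hlt : ∀ t, μ (Ioc 0 t) < 1)
    (hslow : Tendsto (fun t => (1 - (μ (Ioc 0 (t / 2))).toReal) / (1 - (μ (Ioc 0 t)).toReal))
      atTop (𝓝 1)) :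
    Tendsto (fun t => (renewalFunction μ t).toReal * (1 - (μ (Ioc 0 t)).toReal)) atTop (𝓝 1) := by
  have hp (t : ℝ) : (μ (Ioc 0 t)).toReal < 1 :=
    toReal_lt_of_lt_ofReal (by rw [ofReal_one]; exact hlt t)
  have hM := tendsto_div_mul_zero_of_tendsto_half_div (M := fun t => (truncatedMean μ t).toReal)
    (fun s t hst => sub_le_sub_left (toReal_mono (measure_ne_top _ _)
      (measure_mono (Ioc_subset_Ioc_right hst))) 1)
    (fun t => sub_pos.2 (hp t)) hslow (fun t => toReal_nonneg)
    (fun t ht => (truncatedMean_toReal_le ht.le).trans (mul_le_of_le_one_right ht.le (hp t).le))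
    (fun t ht => (truncatedMean_toReal_le_add (half_pos ht).le (half_le_self ht.le)).trans_eq
      (by ring))
  refine tendsto_of_tendsto_of_tendsto_of_le_of_le' (by simpa using tendsto_const_nhds.sub hM)
    tendsto_const_nhds ?_ (Eventually.of_forall fun t => renewalFunction_toReal_mul_le hμ (hlt t))
  filter_upwards [eventually_gt_atTop 0] with t ht
  exact one_sub_le_renewalFunction_toReal_mul hμ ht (hlt t)

/-- **Renewal function for slowly varying tails.** If `μ` is a probability
measure on `(0,∞)` whose distribution function `F(t) = μ((0,t])` has positive,
slowly varying upper tail `1 - F`, then the renewal function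
`U(t) = Σ_n μ^{*n}([0,t])` is finite and `U(t)·(1 - F(t)) → 1` as `t → ∞`. -/
theorem renewal_function_slowly_varying
    (μ : Measure ℝ) [IsProbabilityMeasure μ]
    (hsupp : μ (Set.Iic (0 : ℝ)) = 0)
    (F : ℝ → ℝ) (hF : ∀ t, F t = (μ (Set.Ioc (0 : ℝ) t)).toReal)
    (hFtail : ∀ t : ℝ, 0 < 1 - F t)
    (hFslow : ∀ c : ℝ, 0 < c →
      Tendsto (fun t : ℝ => (1 - F (c * t)) / (1 - F t)) atTop (𝓝 1))
    (U : ℝ → ℝ≥0∞)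
    (hU : ∀ t, U t = ∑' n : ℕ, convPow μ n (Set.Icc 0 t)) :
    (∀ t : ℝ, U t < ⊤) ∧
      Tendsto (fun t : ℝ => (U t).toReal * (1 - F t)) atTop (𝓝 1) := by
  obtain rfl : U = renewalFunction μ := funext hU
  obtain rfl : F = fun t => (μ (Ioc 0 t)).toReal := funext hF
  have hlt (t : ℝ) : μ (Ioc 0 t) < 1 :=
    (lt_ofReal_iff_toReal_lt (measure_ne_top _ _)).2 (sub_pos.1 (hFtail t)) |>.trans_eq ofReal_one
  refine ⟨fun t => renewalFunction_lt_top hsupp (hlt t),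
    tendsto_renewalFunction_toReal_mul hsupp hlt ?_⟩
  simpa only [div_eq_inv_mul] using hFslow 2⁻¹ (by norm_num)
end

section
/- Let (f_n)_{n≥0} be a sequence with 0 ≤ f_n ≤ 1 for all n, and suppose there are constants C > 0, K > 0 and n_0 ≥ 3 such that |f_n − C/log n| ≤ K·(log log n)/(log n)^2 for all n ≥ n_0. Then the Poissonization G(x) := e^{−x}·Σ_{n=0}^∞ f_n·x^n/n! satisfies the same asymptotic expansion: there exist K' > 0 and x_0 such that |G(x) − C/log x| ≤ K'·(log log x)/(log x)^2 for all x ≥ x_0. -/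
/-! With `c = C / log x`, `G x - c` is the Poisson(`x`) average of `f n - c`. On the window
`|n - x| ≤ x / 2` the hypothesis gives `|f n - c| = O(log log x / (log x)²)`, because there
`log n` and `log log n` lie within `1` of `log x` and `log log x`. Outside it `|f n - c| ≤ 1 + C`,
and Chebyshev's inequality with the Poisson variance `x` bounds the weight of that region by
`4 / x = o(log log x / (log x)²)`. -/

open Filter Topology Real
open scoped Nat

lemma hasSum_descFactorial_mul_pow_div_factorial (x : ℝ) (k : ℕ) :
    HasSum (fun n : ℕ => (n.descFactorial k : ℝ) * (x ^ n / n !)) (x ^ k * exp x) := by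
  rw [← hasSum_nat_add_iff' k]
  have hlow : ∑ i ∈ Finset.range k, (i.descFactorial k : ℝ) * (x ^ i / i !) = 0 :=
    Finset.sum_eq_zero fun i hi => by
      rw [Nat.descFactorial_eq_zero_iff_lt.mpr (Finset.mem_range.mp hi)]; simp
  rw [hlow, sub_zero, exp_eq_exp_ℝ]
  refine ((NormedSpace.expSeries_div_hasSum_exp x).mul_left (x ^ k)).congr_fun fun n => ?_
  have hfac := Nat.factorial_mul_descFactorial (Nat.le_add_left k n)
  rw [Nat.add_sub_cancel] at hfac
  rw [← hfac, pow_add]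
  push_cast
  have : (n ! : ℝ) ≠ 0 := by positivity
  have : ((n + k).descFactorial k : ℝ) ≠ 0 := by
    exact_mod_cast (Nat.descFactorial_pos.mpr (Nat.le_add_left k n)).ne'
  field_simp

lemma hasSum_sq_sub_mul_pow_div_factorial (x : ℝ) :
    HasSum (fun n : ℕ => ((n : ℝ) - x) ^ 2 * (x ^ n / n !)) (x * exp x) := by
  have h := ((hasSum_descFactorial_mul_pow_div_factorial x 2).add
    ((hasSum_descFactorial_mul_pow_div_factorial x 1).mul_left (1 - 2 * x))).add
    ((hasSum_descFactorial_mul_pow_div_factorial x 0).mul_left (x ^ 2))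
  convert h using 1
  · ext n
    rcases n with _ | n
    · simp
    · simp only [Nat.descFactorial_succ, Nat.descFactorial_zero]
      push_cast
      ring
  · ring

noncomputable def poissonWeight (x : ℝ) (n : ℕ) : ℝ := exp (-x) * (x ^ n / n !)

lemma poissonWeight_nonneg {x : ℝ} (hx : 0 ≤ x) (n : ℕ) : 0 ≤ poissonWeight x n := by
  unfold poissonWeight; positivity

lemma hasSum_poissonWeight (x : ℝ) : HasSum (poissonWeight x) 1 := by
  have h := (hasSum_descFactorial_mul_pow_div_factorial x 0).mul_left (exp (-x))
  rw [pow_zero, one_mul, ← exp_add, neg_add_cancel, exp_zero] at h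
  exact h.congr_fun fun n => by simp [poissonWeight]

lemma hasSum_sq_sub_mul_poissonWeight (x : ℝ) :
    HasSum (fun n : ℕ => ((n : ℝ) - x) ^ 2 * poissonWeight x n) x := by
  have h := (hasSum_sq_sub_mul_pow_div_factorial x).mul_left (exp (-x))
  rw [mul_left_comm, ← exp_add, neg_add_cancel, exp_zero, mul_one] at h
  exact h.congr_fun fun n => by unfold poissonWeight; ring

lemma abs_sub_le_add_mul_sq_of_window {μ δ B M y e : ℝ} (hδ : 0 < δ) (hB : 0 ≤ B)
    (hM : |e| ≤ M) (hwin : |y - μ| ≤ δ → |e| ≤ B) :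
    |e| ≤ B + M / δ ^ 2 * (y - μ) ^ 2 := by
  rcases le_or_gt |y - μ| δ with hy | hy
  · have : 0 ≤ M / δ ^ 2 * (y - μ) ^ 2 := by
      have := (abs_nonneg e).trans hM
      positivity
    linarith [hwin hy]
  · have hsq : δ ^ 2 ≤ (y - μ) ^ 2 := by
      rw [← sq_abs (y - μ)]; exact pow_le_pow_left₀ hδ.le hy.le 2
    have : M ≤ M / δ ^ 2 * (y - μ) ^ 2 := by
      rw [div_mul_eq_mul_div, le_div_iff₀ (by positivity)]
      exact mul_le_mul_of_nonneg_left hsq ((abs_nonneg e).trans hM)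
    linarith

lemma abs_tsum_mul_sub_le_of_window {w g : ℕ → ℝ} {μ σ2 a B M δ : ℝ}
    (hw : ∀ n, 0 ≤ w n) (hw1 : HasSum w 1)
    (hvar : HasSum (fun n : ℕ => ((n : ℝ) - μ) ^ 2 * w n) σ2)
    (hδ : 0 < δ) (hB : 0 ≤ B) (hM : ∀ n, |g n - a| ≤ M)
    (hwin : ∀ n : ℕ, |(n : ℝ) - μ| ≤ δ → |g n - a| ≤ B) :
    |∑' n, w n * g n - a| ≤ B + M * σ2 / δ ^ 2 := by
  set u := fun n => w n * (g n - a)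
  set bound := fun n : ℕ => B * w n + M / δ ^ 2 * (((n : ℝ) - μ) ^ 2 * w n)
  have hbound : HasSum bound (B + M * σ2 / δ ^ 2) := by
    have h := (hw1.mul_left B).add (hvar.mul_left (M / δ ^ 2))
    rwa [show B * 1 + M / δ ^ 2 * σ2 = B + M * σ2 / δ ^ 2 by ring] at h
  have hu_le : ∀ n, |u n| ≤ bound n := fun n => by
    have := abs_sub_le_add_mul_sq_of_window hδ hB (hM n) (hwin n)
    simp only [u, bound, abs_mul, abs_of_nonneg (hw n)]
    nlinarith [hw n]
  have hu : HasSum u (∑' n, w n * g n - a) := by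
    have hu' : Summable u := hbound.summable.of_norm_bounded hu_le
    have hwg := hu'.hasSum.add (hw1.mul_left a)
    rw [mul_one] at hwg
    rw [(hwg.congr_fun fun n => by simp only [u]; ring).tsum_eq, add_sub_cancel_right]
    exact hu'.hasSum
  rw [abs_le]
  constructor
  · have := hasSum_le (fun n => neg_le_of_abs_le (hu_le n)) hbound.neg hu
    linarith
  · exact hasSum_le (fun n => (le_abs_self _).trans (hu_le n)) hu hbound

lemma abs_log_sub_log_le_one {x y : ℝ} (hx : 0 < x) (hy : |y - x| ≤ x / 2) :
    |log y - log x| ≤ 1 := by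
  obtain ⟨hy₁, hy₂⟩ := abs_le.mp hy
  have ht : 0 < y / x := div_pos (by linarith) hx
  have hupper : y / x ≤ 3 / 2 := by rw [div_le_iff₀ hx]; linarith
  have hlower : (y / x)⁻¹ ≤ 2 := by rw [inv_div, div_le_iff₀ (by linarith)]; linarith
  rw [← log_div (by linarith) hx.ne', abs_le]
  constructor
  · linarith [one_sub_inv_le_log_of_pos ht]
  · linarith [log_le_sub_one_of_pos ht]

lemma two_le_log_of_exp_one_le {x : ℝ} (hx : exp 1 ≤ log x) : 2 ≤ log x := by
  linarith [exp_one_gt_d9]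

lemma one_le_log_log_of_exp_one_le {x : ℝ} (hx : exp 1 ≤ log x) : 1 ≤ log (log x) := by
  rwa [le_log_iff_exp_le ((exp_pos 1).trans_le hx)]

lemma pos_of_abs_sub_le_half {x y : ℝ} (hx : 2 ≤ log x) (hy : |y - x| ≤ x / 2) : 0 < x := by
  refine lt_of_le_of_ne (by linarith [abs_nonneg (y - x)]) ?_
  rintro rfl
  norm_num at hx

lemma half_log_le_log_of_window {x y : ℝ} (hx : 2 ≤ log x) (hy : |y - x| ≤ x / 2) :
    log x / 2 ≤ log y := by
  have := abs_le.mp (abs_log_sub_log_le_one (pos_of_abs_sub_le_half hx hy) hy)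
  linarith

lemma loglog_div_log_sq_le_of_window {x y : ℝ} (hx : exp 1 ≤ log x) (hy : |y - x| ≤ x / 2) :
    log (log y) / log y ^ 2 ≤ 8 * (log (log x) / log x ^ 2) := by
  have hx₂ := two_le_log_of_exp_one_le hx
  have hlogy := half_log_le_log_of_window hx₂ hy
  have hloglogx := one_le_log_log_of_exp_one_le hx
  have hloglogy : log (log y) ≤ 2 * log (log x) := by
    have := abs_le.mp <| abs_log_sub_log_le_one (by linarith) <|
      (abs_log_sub_log_le_one (pos_of_abs_sub_le_half hx₂ hy) hy).trans (by linarith)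
    linarith
  calc log (log y) / log y ^ 2 ≤ 2 * log (log x) / (log x / 2) ^ 2 :=
        div_le_div₀ (by linarith) hloglogy (by positivity)
          (pow_le_pow_left₀ (by linarith) hlogy 2)
    _ = 8 * (log (log x) / log x ^ 2) := by field_simp; ring

lemma abs_div_log_sub_div_log_le {x y : ℝ} (C : ℝ) (hx : 2 ≤ log x) (hy : |y - x| ≤ x / 2) :
    |C / log y - C / log x| ≤ 2 * |C| / log x ^ 2 := by
  have hlogy := half_log_le_log_of_window hx hy
  have hclose := abs_log_sub_log_le_one (pos_of_abs_sub_le_half hx hy) hy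
  have hly : 0 < log y := by linarith
  have hlx : 0 < log x := by linarith
  rw [show C / log y - C / log x = C * (log x - log y) / (log y * log x) by field_simp,
    abs_div, abs_of_pos (mul_pos hly hlx), abs_mul, abs_sub_comm]
  calc |C| * |log y - log x| / (log y * log x) ≤ |C| * 1 / (log x / 2 * log x) :=
        div_le_div₀ (by positivity) (mul_le_mul_of_nonneg_left hclose (abs_nonneg C))
          (by positivity) (mul_le_mul_of_nonneg_right hlogy hlx.le)
    _ = 2 * |C| / log x ^ 2 := by field_simp

lemma eventually_div_le_loglog_div_log_sq (M : ℝ) :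
    ∀ᶠ x in atTop, M / x ≤ log (log x) / log x ^ 2 := by
  have hlim : Tendsto (fun x => M * (log x ^ 2 / x)) atTop (𝓝 0) := by
    simpa using (tendsto_pow_log_div_mul_add_atTop 1 0 2 one_ne_zero).const_mul M
  filter_upwards [hlim.eventually (eventually_le_nhds zero_lt_one),
    eventually_ge_atTop (exp (exp 1))] with x hsmall hx
  have hx0 : 0 < x := (exp_pos _).trans_le hx
  have hlx : exp 1 ≤ log x := (le_log_iff_exp_le hx0).mpr hx
  have hloglogx := one_le_log_log_of_exp_one_le hlx
  have hlx0 : 0 < log x := (exp_pos 1).trans_le hlx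
  calc M / x = M * (log x ^ 2 / x) / log x ^ 2 := by field_simp
    _ ≤ log (log x) / log x ^ 2 := by gcongr; linarith

lemma abs_sub_div_log_le_of_window {f : ℕ → ℝ} {C K : ℝ} {n₀ : ℕ} (hK : 0 ≤ K)
    (hasymp : ∀ n : ℕ, n₀ ≤ n → |f n - C / log n| ≤ K * log (log n) / log n ^ 2)
    {x : ℝ} (hx : exp 1 ≤ log x) (hxn : 2 * n₀ ≤ x) {n : ℕ} (hn : |(n : ℝ) - x| ≤ x / 2) :
    |f n - C / log x| ≤ (8 * K + 2 * |C|) * log (log x) / log x ^ 2 := by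
  have hx₂ := two_le_log_of_exp_one_le hx
  have hn₀ : n₀ ≤ n := by
    have := (abs_le.mp hn).1
    exact_mod_cast (show (n₀ : ℝ) ≤ n by linarith)
  have hloglogx := one_le_log_log_of_exp_one_le hx
  have hasymp_n : |f n - C / log n| ≤ 8 * K * (log (log x) / log x ^ 2) :=
    calc |f n - C / log n| ≤ K * (log (log n) / log n ^ 2) := by
          rw [← mul_div_assoc]; exact hasymp n hn₀
      _ ≤ K * (8 * (log (log x) / log x ^ 2)) := by
          gcongr; exact loglog_div_log_sq_le_of_window hx hn
      _ = 8 * K * (log (log x) / log x ^ 2) := by ring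
  have hshift : |C / log n - C / log x| ≤ 2 * |C| * (log (log x) / log x ^ 2) :=
    calc |C / log n - C / log x| ≤ 2 * |C| / log x ^ 2 := abs_div_log_sub_div_log_le C hx₂ hn
      _ ≤ 2 * |C| * log (log x) / log x ^ 2 :=
          div_le_div_of_nonneg_right (le_mul_of_one_le_right (by positivity) hloglogx)
            (by positivity)
      _ = 2 * |C| * (log (log x) / log x ^ 2) := by ring
  calc |f n - C / log x| ≤ |f n - C / log n| + |C / log n - C / log x| := abs_sub_le _ _ _
    _ ≤ 8 * K * (log (log x) / log x ^ 2) + 2 * |C| * (log (log x) / log x ^ 2) :=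
        add_le_add hasymp_n hshift
    _ = (8 * K + 2 * |C|) * log (log x) / log x ^ 2 := by ring

theorem poissonization_log_asymptotics_general
    (f : ℕ → ℝ) (hf : ∀ n, f n ∈ Set.Icc (0 : ℝ) 1)
    (C K : ℝ) (hC : 0 < C) (hK : 0 < K)
    (n₀ : ℕ)
    (hasymp : ∀ n : ℕ, n₀ ≤ n →
      |f n - C / Real.log n| ≤ K * Real.log (Real.log n) / (Real.log n) ^ 2)
    (G : ℝ → ℝ)
    (hG : ∀ x : ℝ, G x =
      Real.exp (-x) * ∑' n : ℕ, f n * x ^ n / (Nat.factorial n)) :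
    ∃ K' : ℝ, 0 < K' ∧ ∃ x₀ : ℝ, ∀ x : ℝ, x₀ ≤ x →
      |G x - C / Real.log x| ≤ K' * Real.log (Real.log x) / (Real.log x) ^ 2 := by
  obtain ⟨x₀, hx₀⟩ := eventually_atTop.mp <|
    (eventually_div_le_loglog_div_log_sq (4 * (1 + C))).and <|
      (eventually_ge_atTop (exp (exp 1))).and (eventually_ge_atTop (2 * n₀ : ℝ))
  refine ⟨8 * K + 2 * C + 1, by positivity, x₀, fun x hx => ?_⟩
  obtain ⟨htail, hxe, hxn⟩ := hx₀ x hx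
  have hx0 : 0 < x := (exp_pos _).trans_le hxe
  have hlx : exp 1 ≤ log x := (le_log_iff_exp_le hx0).mpr hxe
  have hloglogx := one_le_log_log_of_exp_one_le hlx
  have hc₀ : 0 < C / log x := div_pos hC ((exp_pos 1).trans_le hlx)
  have hc : C / log x ≤ C := div_le_self hC.le (by linarith [add_one_le_exp 1])
  have hGx : G x = ∑' n, poissonWeight x n * f n := by
    rw [hG x, ← tsum_mul_left]
    exact tsum_congr fun n => by unfold poissonWeight; ring
  have hbounded : ∀ n, |f n - C / log x| ≤ 1 + C := fun n =>
    abs_le.mpr ⟨by linarith [(hf n).1], by linarith [(hf n).2]⟩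
  have hwindow := abs_tsum_mul_sub_le_of_window (poissonWeight_nonneg hx0.le)
    (hasSum_poissonWeight x) (hasSum_sq_sub_mul_poissonWeight x) (half_pos hx0)
    (by positivity) hbounded fun n hn => abs_sub_div_log_le_of_window hK.le hasymp hlx hxn hn
  rw [hGx]
  calc _ ≤ (8 * K + 2 * |C|) * log (log x) / log x ^ 2 + (1 + C) * x / (x / 2) ^ 2 := hwindow
    _ = (8 * K + 2 * C) * (log (log x) / log x ^ 2) + 4 * (1 + C) / x := by
        rw [abs_of_pos hC]; field_simp; ring
    _ ≤ (8 * K + 2 * C) * (log (log x) / log x ^ 2) + log (log x) / log x ^ 2 := by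
        gcongr
    _ = (8 * K + 2 * C + 1) * log (log x) / log x ^ 2 := by ring

/-- **Poissonization preserves `C/log` asymptotics.** If `0 ≤ f_n ≤ 1` and
`|f_n - C/log n| ≤ K·(log log n)/(log n)²` for `n ≥ n₀`, then the
Poissonization `G(x) = e^{-x} Σ_n f_n x^n/n!` satisfies
`|G(x) - C/log x| ≤ K'·(log log x)/(log x)²` for large `x`. -/
theorem poissonization_log_asymptotics
    (f : ℕ → ℝ) (hf : ∀ n, f n ∈ Set.Icc (0 : ℝ) 1)
    (C K : ℝ) (hC : 0 < C) (hK : 0 < K)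
    (n₀ : ℕ) (hn₀ : 3 ≤ n₀)
    (hasymp : ∀ n : ℕ, n₀ ≤ n →
      |f n - C / Real.log n| ≤ K * Real.log (Real.log n) / (Real.log n) ^ 2)
    (G : ℝ → ℝ)
    (hG : ∀ x : ℝ, G x =
      Real.exp (-x) * ∑' n : ℕ, f n * x ^ n / (Nat.factorial n)) :
    ∃ K' : ℝ, 0 < K' ∧ ∃ x₀ : ℝ, ∀ x : ℝ, x₀ ≤ x →
      |G x - C / Real.log x| ≤ K' * Real.log (Real.log x) / (Real.log x) ^ 2 :=
  poissonization_log_asymptotics_general f hf C K hC hK n₀ hasymp G hG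
end

section
/- For every real a > 0, σ > 0, x ∈ ℝ and every complex number r, the following Fourier-integral identity holds: e^{−x²/(2aσ²)}·(1 − (i·r/6)·x·(3σ²a − x²)/(σ⁶·a²)) = (σ·√a/√(2π))·∫_{−∞}^{∞} e^{−i·s·x}·e^{−a·σ²·s²/2}·(1 + (r·a/6)·s³) ds, where the integral converges absolutely. -/
/-!
Write `M k = ∫ sᵏ e^{-b s² + i t s} ds`. Since `sᵏ e^{-b s² + i t s}` decays like a Gaussian,
its derivative `(k sᵏ⁻¹ - 2 b sᵏ⁺¹ + i t sᵏ) e^{-b s² + i t s}` has integral zero, which gives the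
recurrence `2 b M (k + 1) = k M (k - 1) + i t M k`. Hence `M 3` is an explicit multiple of `M 0`,
the Fourier transform of the Gaussian, and the identity follows with `b = a σ² / 2`, `t = -x`.
-/

open MeasureTheory Complex Real

noncomputable def gaussianFourierMoment (b : ℂ) (t : ℝ) (k : ℕ) : ℂ :=
  ∫ s : ℝ, (s : ℂ) ^ k * cexp (-b * s ^ 2 + I * t * s)

lemma norm_pow_mul_cexp_neg_mul_sq_add (b : ℂ) (t : ℝ) (k : ℕ) (s : ℝ) :
    ‖(s : ℂ) ^ k * cexp (-b * s ^ 2 + I * t * s)‖ = ‖s ^ (k : ℝ) * rexp (-b.re * s ^ 2)‖ := by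
  rw [Real.rpow_natCast, norm_mul, norm_mul, Complex.norm_exp, norm_pow, Complex.norm_real,
    Real.norm_of_nonneg (Real.exp_pos _).le, norm_pow]
  congr 2
  simp [← ofReal_pow, mul_comm I]

lemma integrable_pow_mul_cexp_neg_mul_sq_add {b : ℂ} (hb : 0 < b.re) (t : ℝ) (k : ℕ) :
    Integrable fun s : ℝ => (s : ℂ) ^ k * cexp (-b * s ^ 2 + I * t * s) :=
  (integrable_rpow_mul_exp_neg_mul_sq hb (by linarith [k.cast_nonneg (α := ℝ)])).norm.mono'
    (by fun_prop) (.of_forall fun s => (norm_pow_mul_cexp_neg_mul_sq_add b t k s).le)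

lemma hasDerivAt_pow_mul_cexp_neg_mul_sq_add (b : ℂ) (t : ℝ) (k : ℕ) (s : ℝ) :
    HasDerivAt (fun s : ℝ => (s : ℂ) ^ k * cexp (-b * s ^ 2 + I * t * s))
      (k * ((s : ℂ) ^ (k - 1) * cexp (-b * s ^ 2 + I * t * s))
        - 2 * b * ((s : ℂ) ^ (k + 1) * cexp (-b * s ^ 2 + I * t * s))
        + I * t * ((s : ℂ) ^ k * cexp (-b * s ^ 2 + I * t * s))) s := by
  have hexp : HasDerivAt (fun z : ℂ => cexp (-b * z ^ 2 + I * t * z))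
      (cexp (-b * s ^ 2 + I * t * s) * (-b * (2 * s) + I * t)) s := by
    simpa using (((hasDerivAt_pow 2 (s : ℂ)).const_mul (-b)).add
      ((hasDerivAt_id (s : ℂ)).const_mul (I * t))).cexp
  refine (((hasDerivAt_pow k (s : ℂ)).mul hexp).comp_ofReal).congr_deriv ?_
  ring

/-- At `k = 0` the truncated `k - 1` is harmless: its term carries the factor `k = 0`. -/
lemma gaussianFourierMoment_succ {b : ℂ} (hb : 0 < b.re) (t : ℝ) (k : ℕ) :
    2 * b * gaussianFourierMoment b t (k + 1) =
      k * gaussianFourierMoment b t (k - 1) + I * t * gaussianFourierMoment b t k := by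
  have hint := integrable_pow_mul_cexp_neg_mul_sq_add hb t
  have hzero := integral_eq_zero_of_hasDerivAt_of_integrable
    (hasDerivAt_pow_mul_cexp_neg_mul_sq_add b t k)
    ((((hint _).const_mul _).sub ((hint _).const_mul _)).add ((hint _).const_mul _)) (hint k)
  rw [integral_add, integral_sub, integral_const_mul, integral_const_mul, integral_const_mul]
    at hzero
  · unfold gaussianFourierMoment
    linear_combination -hzero
  all_goals first
    | exact (hint _).const_mul _
    | exact ((hint _).const_mul _).sub ((hint _).const_mul _)

lemma gaussianFourierMoment_zero {b : ℂ} (hb : 0 < b.re) (t : ℝ) :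
    gaussianFourierMoment b t 0 = (π / b) ^ (1 / 2 : ℂ) * cexp (-t ^ 2 / (4 * b)) := by
  simpa [gaussianFourierMoment, ← Complex.exp_add, add_comm] using fourierIntegral_gaussian hb t

lemma gaussianFourierMoment_three {b : ℂ} (hb : 0 < b.re) (t : ℝ) :
    gaussianFourierMoment b t 3 =
      I * t * (6 * b - t ^ 2) / (8 * b ^ 3) * gaussianFourierMoment b t 0 := by
  have hb0 : b ≠ 0 := by rintro rfl; simp at hb
  have h1 := gaussianFourierMoment_succ hb t 0
  have h2 := gaussianFourierMoment_succ hb t 1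
  have h3 := gaussianFourierMoment_succ hb t 2
  norm_num at h1 h2 h3
  field_simp
  linear_combination 4 * b ^ 2 * h3 + 2 * b * I * t * h2 + (4 * b - t ^ 2) * h1 +
    2 * b * t ^ 2 * gaussianFourierMoment b t 1 * I_sq

lemma cpow_one_half_eq_ofReal_sqrt {t : ℝ} (ht : 0 ≤ t) : (t : ℂ) ^ (1 / 2 : ℂ) = (√t : ℂ) := by
  rw [Real.sqrt_eq_rpow, ofReal_cpow ht]
  norm_num

lemma div_sqrt_two_pi_mul_sqrt_pi_div_eq_one {a σ : ℝ} (ha : 0 < a) (hσ : 0 < σ) :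
    σ * √a / √(2 * π) * √(π / (a * σ ^ 2 / 2)) = 1 := by
  rw [← Real.sqrt_sq hσ.le, ← Real.sqrt_mul (sq_nonneg σ), Real.sqrt_sq hσ.le,
    ← Real.sqrt_div (by positivity), ← Real.sqrt_mul (by positivity), Real.sqrt_eq_one]
  field_simp

/-- **Edgeworth-type Fourier inversion identity.** For `a, σ > 0`, `x ∈ ℝ` and
`r ∈ ℂ`, the Gaussian density with cubic correction equals the corresponding
inverse Fourier integral, and the integrand is (absolutely) integrable. -/
theorem edgeworth_fourier_identity
    (a σ x : ℝ) (ha : 0 < a) (hσ : 0 < σ) (r : ℂ) :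
    Integrable (fun s : ℝ =>
        Complex.exp (-Complex.I * s * x) *
          Complex.exp (-((a : ℂ) * (σ : ℂ) ^ 2 * (s : ℂ) ^ 2) / 2) *
          (1 + (r * (a : ℂ) / 6) * (s : ℂ) ^ 3)) ∧
    Complex.exp (-((x : ℂ) ^ 2) / (2 * (a : ℂ) * (σ : ℂ) ^ 2)) *
        (1 - (Complex.I * r / 6) * (x : ℂ) *
          (3 * (σ : ℂ) ^ 2 * (a : ℂ) - (x : ℂ) ^ 2) / ((σ : ℂ) ^ 6 * (a : ℂ) ^ 2)) =
      ((σ * Real.sqrt a / Real.sqrt (2 * Real.pi) : ℝ) : ℂ) *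
        ∫ s : ℝ, Complex.exp (-Complex.I * s * x) *
          Complex.exp (-((a : ℂ) * (σ : ℂ) ^ 2 * (s : ℂ) ^ 2) / 2) *
          (1 + (r * (a : ℂ) / 6) * (s : ℂ) ^ 3) := by
  set b : ℝ := a * σ ^ 2 / 2 with hb_def
  have hb : 0 < (b : ℂ).re := by simp only [ofReal_re]; positivity
  have hint := integrable_pow_mul_cexp_neg_mul_sq_add hb (-x)
  have hintegrand : (fun s : ℝ => cexp (-I * s * x) * cexp (-(a * σ ^ 2 * s ^ 2) / 2) *
        (1 + r * a / 6 * s ^ 3)) = fun s : ℝ => (s : ℂ) ^ 0 * cexp (-b * s ^ 2 + I * ↑(-x) * s) +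
        r * a / 6 * ((s : ℂ) ^ 3 * cexp (-b * s ^ 2 + I * ↑(-x) * s)) := by
    funext s
    rw [← Complex.exp_add, hb_def]
    push_cast
    ring_nf
  refine ⟨hintegrand ▸ (hint 0).add ((hint 3).const_mul _), ?_⟩
  rw [hintegrand, integral_add (hint 0) ((hint 3).const_mul _), integral_const_mul]
  change _ = _ * (gaussianFourierMoment b (-x) 0 + _ * gaussianFourierMoment b (-x) 3)
  rw [gaussianFourierMoment_three hb, gaussianFourierMoment_zero hb, ← ofReal_div,
    cpow_one_half_eq_ofReal_sqrt (by positivity)]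
  have hnorm : ((σ * √a / √(2 * π) : ℝ) : ℂ) * (√(π / b) : ℝ) = 1 := by
    exact_mod_cast div_sqrt_two_pi_mul_sqrt_pi_div_eq_one ha hσ
  have hexp : -↑(-x) ^ 2 / (4 * b) = -x ^ 2 / (2 * a * σ ^ 2 : ℂ) := by
    rw [hb_def]; push_cast; field_simp; ring
  have hcorrection : 1 - I * r / 6 * x * (3 * σ ^ 2 * a - x ^ 2) / (σ ^ 6 * a ^ 2) =
      1 + r * a / 6 * (I * ↑(-x) * (6 * b - ↑(-x) ^ 2) / (8 * b ^ 3)) := by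
    rw [hb_def]; push_cast; field_simp; ring
  rw [hexp, hcorrection]
  linear_combination -(cexp (-x ^ 2 / (2 * a * σ ^ 2)) *
    (1 + r * a / 6 * (I * ↑(-x) * (6 * b - ↑(-x) ^ 2) / (8 * b ^ 3)))) * hnorm
end

section
/- Let a ∈ ℝ, b ∈ ℂ, and let ε : (0,∞) → ℂ satisfy t^{3/2}·ε(t) → 0 as t → ∞. Then, denoting by z^t = exp(t·Log z) the principal-branch complex power (defined for t large enough that 1 + a/t + b·t^{−3/2} + ε(t) lies in the right half-plane), one has √t · ( (1 + a/t + b·t^{−3/2} + ε(t))^t − e^a·(1 + b·t^{−1/2}) ) → 0 as t → ∞; equivalently, (1 + a/t + b·t^{−3/2} + o(t^{−3/2}))^t = e^a·(1 + b·t^{−1/2} + o(t^{−1/2})). -/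
open Filter Topology Asymptotics

/-! Write the base as `1 + (a + δ t) / t` with `δ t = b / √t + t ε(t)`. Since
`t Log (1 + w) = t w + O(t w²)`, the power is `exp (a + δ + O(1/t))`, and expanding the
exponential to first order gives `e^a (1 + δ + O(δ² + 1/t))`. Finally `δ = b/√t + o(1/√t)`
and `δ² + 1/t = o(1/√t)`. -/

namespace Complex

lemma exp_sub_one_isBigO : (fun z ↦ exp z - 1) =O[𝓝 0] fun z ↦ z := by
  simpa using exp_sub_sum_range_isBigO_pow 1

lemma exp_sub_one_sub_self_isBigO : (fun z ↦ exp z - 1 - z) =O[𝓝 0] fun z ↦ z ^ 2 := by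
  simpa [Finset.sum_range_succ, sub_sub] using exp_sub_sum_range_isBigO_pow 2

lemma mul_log_one_add_sub_mul_isBigO {g : ℝ → ℂ} {c : ℂ}
    (hg : Tendsto (fun x ↦ x * g x) atTop (𝓝 c)) :
    (fun x : ℝ ↦ x * log (1 + g x) - x * g x) =O[atTop] fun x ↦ x⁻¹ := by
  have hg0 := tendsto_zero_of_isBoundedUnder_smul_of_tendsto_cobounded
    hg.norm.isBoundedUnder_le (RCLike.tendsto_ofReal_atTop_cobounded ℂ)
  rw [← isBigO_ofReal_right]
  calc
    _ =O[atTop] fun x ↦ x * g x ^ 2 := by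
      simp_rw [← mul_sub]
      exact (isBigO_refl _ _).mul (log_sub_self_isBigO.comp_tendsto hg0)
    _ =ᶠ[atTop] fun x ↦ (x * g x) ^ 2 * x⁻¹ := by
      filter_upwards [eventually_ne_atTop 0] with x hx0
      push_cast
      field_simp
    _ =O[atTop] _ := by
      simpa using (isBigO_const_of_tendsto hg (one_ne_zero (α := ℂ))).pow 2 |>.mul
        (isBigO_refl (fun x : ℝ ↦ ((x⁻¹ : ℝ) : ℂ)) atTop)

lemma one_add_div_cpow_sub_isBigO (a : ℂ) {δ : ℝ → ℂ} (hδ : Tendsto δ atTop (𝓝 0)) :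
    (fun x : ℝ ↦ (1 + (a + δ x) / x) ^ (x : ℂ) - exp a * (1 + δ x)) =O[atTop]
      fun x ↦ ‖δ x‖ ^ 2 + x⁻¹ := by
  set g : ℝ → ℂ := fun x ↦ (a + δ x) / x
  set u : ℝ → ℂ := fun x ↦ x * log (1 + g x) - x * g x
  have hxg : ∀ᶠ x : ℝ in atTop, x * g x = a + δ x := by
    filter_upwards [eventually_ne_atTop 0] with x hx
    exact mul_div_cancel₀ _ (ofReal_ne_zero.mpr hx)
  have hu : u =O[atTop] fun x ↦ x⁻¹ :=
    mul_log_one_add_sub_mul_isBigO (c := a) <| by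
      simpa using (tendsto_const_nhds.add hδ).congr' (hxg.mono fun _ h ↦ h.symm)
  have hg0 : Tendsto g atTop (𝓝 0) := by
    simpa [g, div_eq_mul_inv] using (tendsto_const_nhds.add hδ).mul tendsto_inv_atTop_zero.ofReal
  have hsplit : (fun x : ℝ ↦ (1 + g x) ^ (x : ℂ) - exp a * (1 + δ x)) =ᶠ[atTop]
      fun x ↦ exp a * ((exp (δ x) - 1 - δ x) + exp (δ x) * (exp (u x) - 1)) := by
    filter_upwards [hxg, hg0.eventually_ne (b₂ := -1) (by simp)] with x hx hgx
    have hpow : (1 + g x) ^ (x : ℂ) = exp a * exp (δ x) * exp (u x) := by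
      rw [cpow_def_of_ne_zero fun h ↦ hgx (by linear_combination h), ← exp_add, ← exp_add]
      simp only [u, hx]
      ring_nf
    rw [hpow]
    ring
  have hsq : (fun x ↦ exp (δ x) - 1 - δ x) =O[atTop] fun x ↦ δ x ^ 2 :=
    exp_sub_one_sub_self_isBigO.comp_tendsto hδ
  have hlin : (fun x ↦ exp (δ x) * (exp (u x) - 1)) =O[atTop] fun x ↦ (1 : ℝ) * x⁻¹ :=
    ((continuous_exp.tendsto 0).comp hδ).isBigO_one ℝ |>.mul
      ((exp_sub_one_isBigO.comp_tendsto (hu.trans_tendsto tendsto_inv_atTop_zero)).trans hu)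
  refine hsplit.trans_isBigO
    (((hsq.norm_right.add_add hlin).const_mul_left _).trans_eventuallyEq ?_)
  filter_upwards [eventually_gt_atTop 0] with x hx
  simp [abs_of_pos hx]

end Complex

lemma Real.rpow_three_halves {t : ℝ} (ht : 0 ≤ t) : t ^ ((3 : ℝ) / 2) = t * √t := by
  rw [Real.sqrt_eq_rpow, ← Real.rpow_one_add' ht (by norm_num)]
  norm_num

namespace Asymptotics

variable {α E : Type*} [SeminormedAddCommGroup E] {l : Filter α} {f : α → E} {g : α → ℝ}

lemma IsBigO.norm_sq_isLittleO (hf : f =O[l] g) (hg : Tendsto g l (𝓝 0)) :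
    (fun x ↦ ‖f x‖ ^ 2) =o[l] g := by
  have hf0 : (fun x ↦ ‖f x‖) =o[l] fun _ ↦ (1 : ℝ) :=
    (isLittleO_one_iff ℝ).2 (hf.norm_left.trans_tendsto hg)
  simpa [sq] using hf.norm_left.mul_isLittleO hf0

lemma IsLittleO.tendsto_mul_norm (hf : f =o[l] fun x ↦ (g x)⁻¹) :
    Tendsto (fun x ↦ g x * ‖f x‖) l (𝓝 0) := by
  simpa [div_inv_eq_mul, mul_comm] using hf.norm_left.tendsto_div_nhds_zero

end Asymptotics

open Complex in
lemma isLittleO_mul_of_tendsto_rpow_three_halves_mul {ε : ℝ → ℂ}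
    (hε : Tendsto (fun t : ℝ ↦ ((t ^ ((3 : ℝ) / 2) : ℝ) : ℂ) * ε t) atTop (𝓝 0)) :
    (fun t : ℝ ↦ (t : ℂ) * ε t) =o[atTop] fun t ↦ (√t)⁻¹ := by
  have h := (isBigO_ofReal_left.2 (isBigO_refl (fun t : ℝ ↦ (√t)⁻¹) atTop)).mul_isLittleO
    ((isLittleO_one_iff ℝ).2 hε)
  simp only [mul_one] at h
  refine h.congr' ?_ EventuallyEq.rfl
  filter_upwards [eventually_gt_atTop 0] with t ht
  have hsqrt : (√t : ℂ) ≠ 0 := ofReal_ne_zero.2 (Real.sqrt_pos.2 ht).ne'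
  rw [Real.rpow_three_halves ht.le]
  push_cast
  field_simp

/-- **Asymptotics of complex powers with a cubic-order correction.** If
`ε(t) = o(t^{-3/2})`, then
`(1 + a/t + b·t^{-3/2} + ε(t))^t = e^a·(1 + b·t^{-1/2} + o(t^{-1/2}))`
as `t → ∞`, where `z^t = exp(t·Log z)` is the principal-branch power. -/
theorem cpow_one_add_asymptotics
    (a : ℝ) (b : ℂ) (ε : ℝ → ℂ)
    (hε : Tendsto (fun t : ℝ => ((t ^ ((3 : ℝ) / 2) : ℝ) : ℂ) * ε t)
      atTop (𝓝 0)) :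
    Tendsto (fun t : ℝ =>
        Real.sqrt t *
          ‖
            ((1 + (a : ℂ) / (t : ℂ) + b * ((t ^ (-(3 : ℝ) / 2) : ℝ) : ℂ) + ε t) ^ (t : ℂ) -
              Real.exp a * (1 + b / ((Real.sqrt t : ℝ) : ℂ)))‖)
      atTop (𝓝 0) := by
  have htε := isLittleO_mul_of_tendsto_rpow_three_halves_mul hε
  set δ : ℝ → ℂ := fun t ↦ b / (√t : ℂ) + t * ε t
  have hinv : Tendsto (fun t : ℝ ↦ (√t)⁻¹) atTop (𝓝 0) :=
    tendsto_inv_atTop_zero.comp Real.tendsto_sqrt_atTop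
  have hδ : δ =O[atTop] fun t ↦ (√t)⁻¹ := by
    refine IsBigO.add ?_ htε.isBigO
    have h := Complex.isBigO_ofReal_left.2 (isBigO_refl (fun t : ℝ ↦ (√t)⁻¹) atTop)
    simpa [div_eq_mul_inv] using h.const_mul_left b
  have hrem : (fun t : ℝ ↦ ‖δ t‖ ^ 2 + t⁻¹) =o[atTop] fun t ↦ (√t)⁻¹ := by
    refine (hδ.norm_sq_isLittleO hinv).add
      (((isBigO_refl _ _).norm_sq_isLittleO hinv).congr' ?_ EventuallyEq.rfl)
    filter_upwards [eventually_ge_atTop 0] with t ht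
    simp [inv_pow, Real.sq_sqrt ht]
  have hpow :=
    (Complex.one_add_div_cpow_sub_isBigO a (hδ.trans_tendsto hinv)).trans_isLittleO hrem
  refine IsLittleO.tendsto_mul_norm <|
    (hpow.add (htε.const_mul_left (Complex.exp a))).congr' ?_ EventuallyEq.rfl
  filter_upwards [eventually_gt_atTop 0] with t ht
  have hbase :
      1 + (a : ℂ) / t + b * ((t ^ (-(3 : ℝ) / 2) : ℝ) : ℂ) + ε t = 1 + (a + δ t) / t := by
    have hsqrt : (√t : ℂ) ≠ 0 := Complex.ofReal_ne_zero.2 (Real.sqrt_pos.2 ht).ne'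
    have ht' : (t : ℂ) ≠ 0 := Complex.ofReal_ne_zero.2 ht.ne'
    rw [neg_div, Real.rpow_neg ht.le, Real.rpow_three_halves ht.le]
    simp only [δ]
    push_cast
    field_simp
    ring
  rw [hbase, Complex.ofReal_exp]
  ring
end
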